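/- Sorting jobs in nonincreasing order of the ratio w_j/p_j minimizes ∑_j w_j C_j over all permutations on a single machine (Smith's rule). -/

import Mathlib

/-!
Exchange argument, done for all pairs at once. Job `i` contributes `p i * w j` to the cost exactly
when it runs no later than `j`. Summing the cost and its transpose, twice the cost is a sum over
ordered pairs `(i, j)` of `pairCost i j`, the joint contribution of `i` and `j` to each other's
weighted completion time. On the diagonal this is `2 p i w i` for every schedule; off the diagonal
it is `p i w j` or `p j w i` according to which job runs first, and Smith's order always picks the
smaller one. So the inequality holds termwise.
-/

open Finset

namespace SmithRule

variable {J α : Type*} [LinearOrder α] (p w : J → ℝ)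

def weightedCompletion [Fintype J] (π : J → α) : ℝ :=
  ∑ j, w j * ∑ i ∈ univ.filter (fun i => π i ≤ π j), p i

def precCost (π : J → α) (i j : J) : ℝ :=
  if π i ≤ π j then p i * w j else 0

def pairCost (π : J → α) (i j : J) : ℝ :=
  precCost p w π i j + precCost p w π j i

theorem weightedCompletion_eq_sum_precCost [Fintype J] (π : J → α) :
    weightedCompletion p w π = ∑ j, ∑ i, precCost p w π i j := by
  refine sum_congr rfl fun j _ => ?_
  rw [mul_sum, sum_filter]
  exact sum_congr rfl fun i _ => by unfold precCost; split_ifs <;> ring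

theorem two_mul_weightedCompletion [Fintype J] (π : J → α) :
    2 * weightedCompletion p w π = ∑ j, ∑ i, pairCost p w π i j := by
  simp only [pairCost, sum_add_distrib, weightedCompletion_eq_sum_precCost]
  rw [two_mul, sum_comm (f := fun j i => precCost p w π j i)]

theorem pairCost_self (π : J → α) (i : J) : pairCost p w π i i = 2 * (p i * w i) := by
  simp [pairCost, precCost, two_mul]

theorem pairCost_comm (π : J → α) (i j : J) : pairCost p w π i j = pairCost p w π j i :=
  add_comm _ _

theorem pairCost_of_lt {π : J → α} {i j : J} (h : π i < π j) :
    pairCost p w π i j = p i * w j := by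
  simp [pairCost, precCost, h.le, h.not_ge]

theorem pairCost_eq_or_of_ne {π : J → α} (hπ : Function.Injective π) {i j : J} (hij : i ≠ j) :
    pairCost p w π i j = p i * w j ∨ pairCost p w π i j = p j * w i := by
  rcases (hπ.ne hij).lt_or_gt with h | h
  · exact .inl (pairCost_of_lt p w h)
  · exact .inr (by rw [pairCost_comm, pairCost_of_lt p w h])

theorem pairCost_le_of_ratio_antitone (hp : ∀ j, 0 < p j) {σ : J → α}
    (hσ : Function.Injective σ) (hsorted : ∀ i j, σ i ≤ σ j → w j / p j ≤ w i / p i)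
    {i j : J} (hij : i ≠ j) : pairCost p w σ i j ≤ min (p i * w j) (p j * w i) := by
  rcases (hσ.ne hij).lt_or_gt with h | h
  · have hr := (div_le_div_iff₀ (hp j) (hp i)).1 (hsorted i j h.le)
    rw [pairCost_of_lt p w h]
    exact le_min le_rfl (by linarith)
  · have hr := (div_le_div_iff₀ (hp i) (hp j)).1 (hsorted j i h.le)
    rw [pairCost_comm, pairCost_of_lt p w h]
    exact le_min (by linarith) le_rfl

theorem pairCost_le_pairCost (hp : ∀ j, 0 < p j) {σ τ : J → α}
    (hσ : Function.Injective σ) (hsorted : ∀ i j, σ i ≤ σ j → w j / p j ≤ w i / p i)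
    (hτ : Function.Injective τ) (i j : J) : pairCost p w σ i j ≤ pairCost p w τ i j := by
  obtain rfl | hij := eq_or_ne i j
  · rw [pairCost_self, pairCost_self]
  have hmin := pairCost_le_of_ratio_antitone p w hp hσ hsorted hij
  rcases pairCost_eq_or_of_ne p w hτ hij with h | h <;> rw [h] <;>
    linarith [min_le_left (p i * w j) (p j * w i), min_le_right (p i * w j) (p j * w i)]

theorem weightedCompletion_le_of_ratio_antitone [Fintype J] (hp : ∀ j, 0 < p j) {σ τ : J → α}
    (hσ : Function.Injective σ) (hsorted : ∀ i j, σ i ≤ σ j → w j / p j ≤ w i / p i)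
    (hτ : Function.Injective τ) : weightedCompletion p w σ ≤ weightedCompletion p w τ := by
  have h : 2 * weightedCompletion p w σ ≤ 2 * weightedCompletion p w τ := by
    rw [two_mul_weightedCompletion, two_mul_weightedCompletion]
    exact sum_le_sum fun j _ => sum_le_sum fun i _ =>
      pairCost_le_pairCost p w hp hσ hsorted hτ i j
  linarith

end SmithRule

theorem stmt2_general {J : Type*} [Fintype J] (p w : J → ℝ)
    (hp : ∀ j, 0 < p j)
    (σ : J ≃ Fin (Fintype.card J))
    (hsorted : ∀ i j : J, σ i ≤ σ j → w j / p j ≤ w i / p i)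
    (τ : J ≃ Fin (Fintype.card J)) :
    ∑ j, w j * ∑ i ∈ Finset.univ.filter (fun i => σ i ≤ σ j), p i
      ≤ ∑ j, w j * ∑ i ∈ Finset.univ.filter (fun i => τ i ≤ τ j), p i :=
  SmithRule.weightedCompletion_le_of_ratio_antitone p w hp σ.injective hsorted τ.injective

/-- Smith's rule — nonincreasing w/p order minimizes ∑ w_j C_j. -/
theorem stmt2 {J : Type*} [Fintype J] [DecidableEq J] (p w : J → ℝ)
    (hp : ∀ j, 0 < p j) (hw : ∀ j, 0 ≤ w j)
    (σ : J ≃ Fin (Fintype.card J))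
    (hsorted : ∀ i j : J, σ i ≤ σ j → w j / p j ≤ w i / p i)
    (τ : J ≃ Fin (Fintype.card J)) :
    ∑ j, w j * ∑ i ∈ Finset.univ.filter (fun i => σ i ≤ σ j), p i
      ≤ ∑ j, w j * ∑ i ∈ Finset.univ.filter (fun i => τ i ≤ τ j), p i :=
  stmt2_general p w hp σ hsorted τ
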